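/- arXiv:2203.07898 — 2 statements merged into one kernel-verified Lean document; each statement's English description precedes it below -/
import Mathlib

section
/- Let π = (π₁,…,π_n) and σ = (σ₁,…,σ_m) be curves in ℝ^d equipped with the L₁ norm, and let f(τ) := d_DTW(π, σ+τ). Then there exists a translation τ* ∈ ℝ^d with τ*_k ∈ {π_i[k] − σ_j[k] : i ∈ [n], j ∈ [m]} for every coordinate k ∈ [d], such that f(τ*) ≤ f(τ) for all τ ∈ ℝ^d; in particular the infimum inf_{τ ∈ ℝ^d} f(τ) is attained at a point of this finite candidate set. -/
open Finset

/-- A traversal of two curves of lengths `n` and `m` (1-indexed): a nonempty list of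
index pairs starting at `(1,1)`, ending at `(n,m)`, where each step increases the first
index, the second index, or both, by one. -/
def IsTraversal (n m : ℕ) (T : List (ℕ × ℕ)) : Prop :=
  T.head? = some (1, 1) ∧ T.getLast? = some (n, m) ∧
  ∀ ℓ : ℕ, ℓ + 1 < T.length →
    T.getD (ℓ + 1) (0, 0) = ((T.getD ℓ (0, 0)).1 + 1, (T.getD ℓ (0, 0)).2) ∨
    T.getD (ℓ + 1) (0, 0) = ((T.getD ℓ (0, 0)).1, (T.getD ℓ (0, 0)).2 + 1) ∨
    T.getD (ℓ + 1) (0, 0) = ((T.getD ℓ (0, 0)).1 + 1, (T.getD ℓ (0, 0)).2 + 1)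

/-- The `L₁` norm on `ℝ^d`. -/
def l1norm {d : ℕ} (x : Fin d → ℝ) : ℝ := ∑ k, |x k|

/-- The dynamic time warping distance, with respect to the `L₁` norm on `ℝ^d`, of two
curves `π = (π 1, …, π n)` and `σ = (σ 1, …, σ m)`: the minimum, over all traversals, of
the sum of the `L₁` distances of the paired points. -/
noncomputable def dtwL1 {d : ℕ} (n m : ℕ) (π σ : ℕ → Fin d → ℝ) : ℝ :=
  sInf {c : ℝ | ∃ T : List (ℕ × ℕ), IsTraversal n m T ∧
    (T.map fun p => l1norm (π p.1 - σ p.2)).sum = c}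

/-!
For a fixed traversal `T`, the `L₁` cost of `σ + τ` splits over the coordinates into the sums
`∑_{(i,j) ∈ T} |π_i[k] - σ_j[k] - τ_k|`, and a sum of distances to finitely many reals is
minimised at one of them (a median). So every traversal cost at `τ` dominates the same
traversal cost at some point of the finite grid, hence `d_DTW` at the grid point minimising it.
-/

theorem Finset.exists_mem_sum_abs_sub_le_of_two_mul_card_le {ι : Type*} {s : Finset ι}
    (hs : s.Nonempty) (A : ι → ℝ) (t : ℝ) (h : 2 * #{j ∈ s | A j < t} ≤ #s) :
    ∃ i ∈ s, ∑ j ∈ s, |A j - A i| ≤ ∑ j ∈ s, |A j - t| := by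
  have hcard := card_filter_add_card_filter_not (s := s) (fun j => A j < t)
  obtain ⟨i, hi, hmin⟩ := exists_min_image {j ∈ s | ¬A j < t} A
    (card_pos.1 (by have := hs.card_pos; omega))
  rw [mem_filter, not_lt] at hi
  refine ⟨i, hi.1, ?_⟩
  -- Moving `t` up to `A i` costs `A i - t` on each value below `t` and saves as much on each
  -- other value, since no value lies strictly between `t` and `A i`.
  have hsplit : ∀ j ∈ s, |A j - A i| = |A j - t| + (A i - t) * if A j < t then 1 else -1 := by
    intro j hj
    split_ifs with hjt
    · rw [abs_of_neg (by linarith), abs_of_neg (by linarith)]; ring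
    · have := hmin j (mem_filter.2 ⟨hj, hjt⟩)
      rw [abs_of_nonneg (by linarith), abs_of_nonneg (by linarith)]; ring
  have hle : (#{j ∈ s | A j < t} : ℝ) ≤ #{j ∈ s | ¬A j < t} := by exact_mod_cast (by omega)
  rw [sum_congr rfl hsplit, sum_add_distrib, ← mul_sum, sum_ite, sum_const, sum_const,
    nsmul_eq_mul, nsmul_eq_mul]
  nlinarith [hi.2]

theorem Finset.exists_mem_sum_abs_sub_le {ι : Type*} {s : Finset ι} (hs : s.Nonempty)
    (A : ι → ℝ) (t : ℝ) : ∃ i ∈ s, ∑ j ∈ s, |A j - A i| ≤ ∑ j ∈ s, |A j - t| := by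
  by_cases h : 2 * #{j ∈ s | A j < t} ≤ #s
  · exact exists_mem_sum_abs_sub_le_of_two_mul_card_le hs A t h
  have hcard := card_filter_add_card_filter_not (s := s) (fun j => A j < t)
  have hgt : #{j ∈ s | -A j < -t} ≤ #{j ∈ s | ¬A j < t} :=
    card_le_card (monotone_filter_right _ fun j _ hj => (neg_lt_neg_iff.1 hj).asymm)
  obtain ⟨i, hi, hle⟩ := exists_mem_sum_abs_sub_le_of_two_mul_card_le hs (-A) (-t) (by
    simp only [Pi.neg_apply]; omega)
  refine ⟨i, hi, ?_⟩
  simpa only [Pi.neg_apply, neg_sub_neg, abs_sub_comm] using hle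

theorem List.exists_mem_sum_map_abs_sub_le {α : Type*} {l : List α} (hl : l ≠ []) (a : α → ℝ)
    (t : ℝ) : ∃ p ∈ l, (l.map fun q => |a q - a p|).sum ≤ (l.map fun q => |a q - t|).sum := by
  have : Nonempty (Fin l.length) := ⟨⟨0, length_pos_iff.2 hl⟩⟩
  obtain ⟨i, -, hi⟩ := exists_mem_sum_abs_sub_le univ_nonempty (fun j : Fin l.length => a l[j]) t
  refine ⟨l[i], getElem_mem _, ?_⟩
  rwa [← Fin.sum_univ_fun_getElem l (fun q => |a q - a l[i]|), ← Fin.sum_univ_fun_getElem l]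

def IsTraversalStep (a b : ℕ × ℕ) : Prop :=
  b = (a.1 + 1, a.2) ∨ b = (a.1, a.2 + 1) ∨ b = (a.1 + 1, a.2 + 1)

theorem IsTraversalStep.le {a b : ℕ × ℕ} (h : IsTraversalStep a b) : a ≤ b := by
  rcases h with rfl | rfl | rfl <;> simp [Prod.le_def]

theorem isTraversal_iff {n m : ℕ} {T : List (ℕ × ℕ)} :
    IsTraversal n m T ↔
      T.head? = some (1, 1) ∧ T.getLast? = some (n, m) ∧ T.IsChain IsTraversalStep := by
  refine and_congr_right fun _ => and_congr_right fun _ => ?_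
  rw [List.isChain_iff_getElem]
  refine forall_congr' fun ℓ => forall_congr' fun hℓ => ?_
  rw [List.getD_eq_getElem _ _ hℓ, List.getD_eq_getElem _ _ (by omega), IsTraversalStep]

theorem IsTraversal.ne_nil {n m : ℕ} {T : List (ℕ × ℕ)} (hT : IsTraversal n m T) : T ≠ [] :=
  List.ne_nil_of_mem (List.mem_of_mem_head? hT.1)

theorem IsTraversal.mem_Icc {n m : ℕ} {T : List (ℕ × ℕ)} (hT : IsTraversal n m T)
    {p : ℕ × ℕ} (hp : p ∈ T) : p.1 ∈ Icc 1 n ∧ p.2 ∈ Icc 1 m := by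
  obtain ⟨hhead, hlast, hchain⟩ := isTraversal_iff.1 hT
  have hsorted : T.Pairwise (· ≤ ·) := (hchain.imp fun _ _ => IsTraversalStep.le).pairwise
  have hfirst : (1, 1) ≤ p := by
    obtain ⟨T', rfl⟩ := List.head?_eq_some_iff.1 hhead
    rcases List.mem_cons.1 hp with rfl | hp
    · exact le_rfl
    · exact List.rel_of_pairwise_cons hsorted hp
  have hlast : p ≤ (n, m) := by
    obtain ⟨T', rfl⟩ := List.getLast?_eq_some_iff.1 hlast
    rcases List.mem_append.1 hp with hp | hp
    · exact (List.pairwise_append.1 hsorted).2.2 p hp _ (List.mem_singleton_self _)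
    · exact (List.mem_singleton.1 hp).le
  exact ⟨Finset.mem_Icc.2 ⟨hfirst.1, hlast.1⟩, Finset.mem_Icc.2 ⟨hfirst.2, hlast.2⟩⟩

theorem IsTraversal.append_singleton {n m : ℕ} {T : List (ℕ × ℕ)} (hT : IsTraversal n m T)
    {b : ℕ × ℕ} (hb : IsTraversalStep (n, m) b) : IsTraversal b.1 b.2 (T ++ [b]) := by
  obtain ⟨hhead, hlast, hchain⟩ := isTraversal_iff.1 hT
  exact isTraversal_iff.2 ⟨by simp [hhead], by simp,
    List.isChain_append.2 ⟨hchain, List.isChain_singleton b, by simpa [hlast] using hb⟩⟩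

theorem exists_isTraversal {n m : ℕ} (hn : 1 ≤ n) (hm : 1 ≤ m) : ∃ T, IsTraversal n m T := by
  induction n, hn using Nat.le_induction with
  | base =>
    induction m, hm using Nat.le_induction with
    | base => exact ⟨[(1, 1)], isTraversal_iff.2 ⟨rfl, rfl, List.isChain_singleton _⟩⟩
    | succ m _ ih =>
      obtain ⟨T, hT⟩ := ih
      exact ⟨_, hT.append_singleton (b := (1, m + 1)) (Or.inr (Or.inl rfl))⟩
  | succ n _ ih =>
    obtain ⟨T, hT⟩ := ih
    exact ⟨_, hT.append_singleton (b := (n + 1, m)) (Or.inl rfl)⟩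

section TraversalCost

variable {d n m : ℕ} {π σ : ℕ → Fin d → ℝ} {T : List (ℕ × ℕ)}

def traversalCost (π σ : ℕ → Fin d → ℝ) (T : List (ℕ × ℕ)) : ℝ :=
  (T.map fun p => l1norm (π p.1 - σ p.2)).sum

theorem traversalCost_nonneg : 0 ≤ traversalCost π σ T :=
  List.sum_nonneg fun _ hc => by
    obtain ⟨_, -, rfl⟩ := List.mem_map.1 hc
    exact sum_nonneg fun _ _ => abs_nonneg _

theorem dtwL1_le_traversalCost (hT : IsTraversal n m T) : dtwL1 n m π σ ≤ traversalCost π σ T :=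
  csInf_le ⟨0, by rintro _ ⟨T, -, rfl⟩; exact traversalCost_nonneg⟩ ⟨T, hT, rfl⟩

theorem le_dtwL1 (hn : 1 ≤ n) (hm : 1 ≤ m) {c : ℝ}
    (h : ∀ T, IsTraversal n m T → c ≤ traversalCost π σ T) : c ≤ dtwL1 n m π σ := by
  obtain ⟨T, hT⟩ := exists_isTraversal hn hm
  exact le_csInf ⟨_, T, hT, rfl⟩ (by rintro _ ⟨T, hT, rfl⟩; exact h T hT)

theorem traversalCost_add_const (τ : Fin d → ℝ) :
    traversalCost π (fun j => σ j + τ) T =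
      ∑ k, (T.map fun p => |π p.1 k - σ p.2 k - τ k|).sum := by
  simp only [traversalCost, l1norm, Pi.sub_apply]
  rw [← Fin.sum_univ_fun_getElem T, sum_comm]
  simp only [← Fin.sum_univ_fun_getElem T, Pi.add_apply, sub_add_eq_sub_sub]

theorem exists_traversalCost_add_const_le (hT : T ≠ []) (τ : Fin d → ℝ) :
    ∃ s : Fin d → ℝ, (∀ k, ∃ p ∈ T, s k = π p.1 k - σ p.2 k) ∧
      traversalCost π (fun j => σ j + s) T ≤ traversalCost π (fun j => σ j + τ) T := by
  choose p hpT hp using fun k =>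
    List.exists_mem_sum_map_abs_sub_le hT (fun q => π q.1 k - σ q.2 k) (τ k)
  refine ⟨fun k => π (p k).1 k - σ (p k).2 k, fun k => ⟨p k, hpT k, rfl⟩, ?_⟩
  rw [traversalCost_add_const, traversalCost_add_const]
  exact sum_le_sum fun k _ => hp k

variable (n m π σ) in
noncomputable def candidateGrid : Finset (Fin d → ℝ) :=
  Fintype.piFinset fun k => (Icc 1 n ×ˢ Icc 1 m).image fun p => π p.1 k - σ p.2 k

theorem mem_candidateGrid {τ : Fin d → ℝ} :
    τ ∈ candidateGrid n m π σ ↔ ∀ k, ∃ i ∈ Icc 1 n, ∃ j ∈ Icc 1 m, τ k = π i k - σ j k := by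
  simp only [candidateGrid, Fintype.mem_piFinset, mem_image, mem_product, Prod.exists, and_assoc,
    exists_and_left, eq_comm]

theorem candidateGrid_nonempty (hn : 1 ≤ n) (hm : 1 ≤ m) : (candidateGrid n m π σ).Nonempty :=
  ⟨_, mem_candidateGrid.2 fun _ => ⟨1, mem_Icc.2 ⟨le_rfl, hn⟩, 1, mem_Icc.2 ⟨le_rfl, hm⟩, rfl⟩⟩

theorem IsTraversal.exists_mem_candidateGrid_traversalCost_le (hT : IsTraversal n m T)
    (τ : Fin d → ℝ) : ∃ s ∈ candidateGrid n m π σ,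
      traversalCost π (fun j => σ j + s) T ≤ traversalCost π (fun j => σ j + τ) T := by
  obtain ⟨s, hs, hle⟩ := exists_traversalCost_add_const_le hT.ne_nil τ
  refine ⟨s, mem_candidateGrid.2 fun k => ?_, hle⟩
  obtain ⟨p, hp, hsk⟩ := hs k
  obtain ⟨hi, hj⟩ := hT.mem_Icc hp
  exact ⟨p.1, hi, p.2, hj, hsk⟩

end TraversalCost

theorem dtwL1_min_on_candidate_grid_general (d n m : ℕ) (hn : 1 ≤ n) (hm : 1 ≤ m)
    (π σ : ℕ → Fin d → ℝ) :
    ∃ τs : Fin d → ℝ,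
      (∀ k : Fin d, ∃ i ∈ Finset.Icc 1 n, ∃ j ∈ Finset.Icc 1 m, τs k = π i k - σ j k) ∧
      ∀ τ : Fin d → ℝ, dtwL1 n m π (fun j => σ j + τs) ≤ dtwL1 n m π (fun j => σ j + τ) := by
  obtain ⟨τs, hτs, hmin⟩ := exists_min_image (candidateGrid n m π σ)
    (fun τ => dtwL1 n m π (fun j => σ j + τ)) (candidateGrid_nonempty hn hm)
  refine ⟨τs, mem_candidateGrid.1 hτs, fun τ => le_dtwL1 hn hm fun T hT => ?_⟩
  obtain ⟨s, hs, hle⟩ := hT.exists_mem_candidateGrid_traversalCost_le τ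
  calc dtwL1 n m π (fun j => σ j + τs) ≤ dtwL1 n m π (fun j => σ j + s) := hmin s hs
    _ ≤ traversalCost π (fun j => σ j + s) T := dtwL1_le_traversalCost hT
    _ ≤ traversalCost π (fun j => σ j + τ) T := hle

/-- For the `L₁` norm on `ℝ^d`, the function `f(τ) = d_DTW(π, σ + τ)` attains a global
minimum at some translation `τ*` each of whose coordinates is of the form
`π_i[k] - σ_j[k]` for some `i ∈ [n]`, `j ∈ [m]`. -/
theorem dtwL1_min_on_candidate_grid (d n m : ℕ) (hd : 1 ≤ d) (hn : 1 ≤ n) (hm : 1 ≤ m)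
    (π σ : ℕ → Fin d → ℝ) :
    ∃ τs : Fin d → ℝ,
      (∀ k : Fin d, ∃ i ∈ Finset.Icc 1 n, ∃ j ∈ Finset.Icc 1 m, τs k = π i k - σ j k) ∧
      ∀ τ : Fin d → ℝ, dtwL1 n m π (fun j => σ j + τs) ≤ dtwL1 n m π (fun j => σ j + τ) :=
  dtwL1_min_on_candidate_grid_general d n m hn hm π σ
end

section
/- Let π = (π₁,…,π_n) and σ = (σ₁,…,σ_m) be curves in ℝ^d equipped with the L₁ norm, and let Q = ∏_{k=1}^{d} [x_k, x'_k] be an axis-parallel box such that for every i ∈ [n], j ∈ [m], k ∈ [d] the value π_i[k] − σ_j[k] does not lie in the open interval (x_k, x'_k). Then the function τ ↦ d_DTW(π, σ+τ) is concave on Q, and hence attains its minimum over Q at one of the 2^d corners of Q. -/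
open Finset

/-!
For a fixed traversal the cost is a sum of terms `|π_i[k] - σ_j[k] - τ_k|`. The grid condition
says that `π_i[k] - σ_j[k]` lies on one side of `[x_k, x'_k]`, so each term is affine, hence
concave, in `τ ∈ Q`. The DTW distance is the infimum of these costs, so it is concave on `Q`,
and a concave function on a box is minimised at a corner because the box is the convex hull of
its corners.
-/

namespace IsTraversal

variable {n m : ℕ} {T : List (ℕ × ℕ)}

lemma getD_zero (hT : IsTraversal n m T) : T.getD 0 (0, 0) = (1, 1) := by
  rw [List.getD_eq_getElem?_getD, ← List.head?_eq_getElem?, hT.1, Option.getD_some]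

lemma getD_length_sub_one (hT : IsTraversal n m T) : T.getD (T.length - 1) (0, 0) = (n, m) := by
  rw [List.getD_eq_getElem?_getD, ← List.getLast?_eq_getElem?, hT.2.1, Option.getD_some]

lemma getD_mono (hT : IsTraversal n m T) {a b : ℕ} (hab : a ≤ b) (hb : b < T.length) :
    T.getD a (0, 0) ≤ T.getD b (0, 0) := by
  induction b, hab using Nat.le_induction with
  | base => exact le_rfl
  | succ b _ ih =>
    refine (ih (by omega)).trans ?_
    rcases hT.2.2 b hb with h | h | h <;> rw [h] <;> constructor <;> dsimp only <;> omega

lemma mem_Icc_of_mem (hT : IsTraversal n m T) {p : ℕ × ℕ} (hp : p ∈ T) :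
    p.1 ∈ Finset.Icc 1 n ∧ p.2 ∈ Finset.Icc 1 m := by
  obtain ⟨i, hi, rfl⟩ := List.mem_iff_getElem.1 hp
  have hfirst := hT.getD_zero ▸ hT.getD_mono (Nat.zero_le i) hi
  have hlast := hT.getD_length_sub_one ▸ hT.getD_mono (Nat.le_sub_one_of_lt hi) (by omega)
  rw [List.getD_eq_getElem _ _ hi] at hfirst hlast
  simp only [Finset.mem_Icc]
  exact ⟨⟨hfirst.1, hlast.1⟩, hfirst.2, hlast.2⟩

end IsTraversal

section Concavity

variable {ι E : Type*} [AddCommGroup E] [Module ℝ E] {s : Set E}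

lemma concaveOn_finset_sum (hs : Convex ℝ s) {t : Finset ι} {g : ι → E → ℝ}
    (hg : ∀ i ∈ t, ConcaveOn ℝ s (g i)) : ConcaveOn ℝ s fun x => ∑ i ∈ t, g i x := by
  have := Finset.sum_induction g (ConcaveOn ℝ s) (fun _ _ => ConcaveOn.add)
    (concaveOn_const 0 hs) hg
  simpa only [Finset.sum_fn] using this

lemma concaveOn_list_sum (hs : Convex ℝ s) {l : List ι} {g : ι → E → ℝ}
    (hg : ∀ i ∈ l, ConcaveOn ℝ s (g i)) : ConcaveOn ℝ s fun x => (l.map fun i => g i x).sum := by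
  induction l with
  | nil => simpa using concaveOn_const 0 hs
  | cons i l ih =>
    simp only [List.map_cons, List.sum_cons]
    exact (hg i (by simp)).add (ih fun j hj => hg j (by simp [hj]))

/-- With `sInf ∅ = 0` on `ℝ`, the claim also holds for `S = ∅`. -/
lemma concaveOn_sInf_image (hs : Convex ℝ s) {S : Set ι} {g : ι → E → ℝ}
    (hg : ∀ i ∈ S, ConcaveOn ℝ s (g i)) (hbdd : ∀ x ∈ s, BddBelow ((g · x) '' S)) :
    ConcaveOn ℝ s fun x => sInf ((g · x) '' S) := by
  refine ⟨hs, fun x hx y hy a b ha hb hab => ?_⟩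
  rcases S.eq_empty_or_nonempty with rfl | hS
  · simp
  refine le_csInf (hS.image _) ?_
  rintro _ ⟨i, hi, rfl⟩
  calc a • sInf ((g · x) '' S) + b • sInf ((g · y) '' S)
      ≤ a • g i x + b • g i y :=
        add_le_add (smul_le_smul_of_nonneg_left (csInf_le (hbdd x hx) ⟨i, hi, rfl⟩) ha)
          (smul_le_smul_of_nonneg_left (csInf_le (hbdd y hy) ⟨i, hi, rfl⟩) hb)
    _ ≤ g i (a • x + b • y) := (hg i hi).2 hx hy ha hb hab

end Concavity

theorem ConcaveOn.exists_corner_le {ι : Type*} [Finite ι] {x x' : ι → ℝ} {f : (ι → ℝ) → ℝ}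
    (hf : ConcaveOn ℝ (Set.Icc x x') f) :
    ∃ c : ι → ℝ, (∀ k, c k = x k ∨ c k = x' k) ∧ ∀ τ ∈ Set.Icc x x', f c ≤ f τ := by
  set C := Set.univ.pi fun k => ({x k, x' k} : Set ℝ)
  obtain ⟨c, hcC, hcmin⟩ := Set.exists_min_image C f (Set.Finite.pi fun k => Set.toFinite _)
    ⟨x, fun k _ => Or.inl rfl⟩
  refine ⟨c, fun k => hcC k trivial, fun τ hτ => ?_⟩
  have hxx : x ≤ x' := hτ.1.trans hτ.2
  have hCsub : C ⊆ Set.Icc x x' := by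
    intro y hy
    constructor <;> intro k <;> rcases hy k trivial with h | (h : y k = x' k) <;> simp [h, hxx k]
  have hτC : τ ∈ convexHull ℝ C := by
    rw [convexHull_pi]
    intro k _
    dsimp only
    rw [convexHull_pair, segment_eq_Icc (hxx k)]
    exact ⟨hτ.1 k, hτ.2 k⟩
  obtain ⟨y, hyC, hy⟩ := hf.exists_le_of_mem_convexHull hCsub hτC
  exact (hcmin y hyC).trans hy

lemma concaveOn_abs_sub_Icc {a b c : ℝ} (hc : c ∉ Set.Ioo a b) :
    ConcaveOn ℝ (Set.Icc a b) fun t => |c - t| := by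
  rcases le_or_gt c a with hca | hac
  · refine ((concaveOn_id (convex_Icc a b)).sub (convexOn_const c (convex_Icc a b))).congr ?_
    intro t ht
    simp [abs_of_nonpos (by linarith [ht.1] : c - t ≤ 0)]
  · have hbc : b ≤ c := not_lt.1 fun hcb => hc ⟨hac, hcb⟩
    refine ((concaveOn_const c (convex_Icc a b)).sub (convexOn_id (convex_Icc a b))).congr ?_
    intro t ht
    simp [abs_of_nonneg (by linarith [ht.2] : 0 ≤ c - t)]

lemma concaveOn_l1norm_sub_Icc {d : ℕ} {x x' c : Fin d → ℝ}
    (hc : ∀ k, c k ∉ Set.Ioo (x k) (x' k)) :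
    ConcaveOn ℝ (Set.Icc x x') fun τ => l1norm (c - τ) := by
  refine concaveOn_finset_sum (convex_Icc x x') fun k _ => ?_
  refine ((concaveOn_abs_sub_Icc (hc k)).comp_linearMap (LinearMap.proj k)).subset ?_
    (convex_Icc x x')
  exact fun τ hτ => ⟨hτ.1 k, hτ.2 k⟩

lemma l1norm_nonneg {d : ℕ} (x : Fin d → ℝ) : 0 ≤ l1norm x :=
  Finset.sum_nonneg fun k _ => abs_nonneg (x k)

theorem dtwL1_concave_on_cell_general (d n m : ℕ)
    (π σ : ℕ → Fin d → ℝ) (x x' : Fin d → ℝ)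
    (hgrid : ∀ i ∈ Finset.Icc 1 n, ∀ j ∈ Finset.Icc 1 m, ∀ k : Fin d,
      π i k - σ j k ∉ Set.Ioo (x k) (x' k)) :
    ConcaveOn ℝ (Set.Icc x x') (fun τ => dtwL1 n m π (fun j => σ j + τ)) ∧
    ∃ c : Fin d → ℝ, (∀ k : Fin d, c k = x k ∨ c k = x' k) ∧
      ∀ τ ∈ Set.Icc x x',
        dtwL1 n m π (fun j => σ j + c) ≤ dtwL1 n m π (fun j => σ j + τ) := by
  have hcost : ∀ T ∈ {T | IsTraversal n m T}, ConcaveOn ℝ (Set.Icc x x')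
      fun τ => (T.map fun p => l1norm (π p.1 - (σ p.2 + τ))).sum := by
    intro T hT
    refine concaveOn_list_sum (convex_Icc x x') fun p hp => ?_
    obtain ⟨hi, hj⟩ := hT.mem_Icc_of_mem hp
    simpa only [sub_add_eq_sub_sub] using
      concaveOn_l1norm_sub_Icc (c := π p.1 - σ p.2) (hgrid p.1 hi p.2 hj)
  have hconc : ConcaveOn ℝ (Set.Icc x x') (fun τ => dtwL1 n m π (fun j => σ j + τ)) :=
    concaveOn_sInf_image (convex_Icc x x') hcost fun τ _ =>
      ⟨0, by
        rintro _ ⟨T, -, rfl⟩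
        refine List.sum_nonneg fun _ hc => ?_
        obtain ⟨p, -, rfl⟩ := List.mem_map.1 hc
        exact l1norm_nonneg _⟩
  exact ⟨hconc, hconc.exists_corner_le⟩

/-- If, for all `i ∈ [n]`, `j ∈ [m]` and coordinates `k`, the value `π_i[k] - σ_j[k]` does
not lie in the open interval `(x_k, x'_k)`, then `τ ↦ d_DTW(π, σ + τ)` (w.r.t. the `L₁`
norm) is concave on the box `Q = ∏ₖ [x_k, x'_k]` and attains its minimum over `Q` at one
of the corners of `Q`. -/
theorem dtwL1_concave_on_cell (d n m : ℕ) (hn : 1 ≤ n) (hm : 1 ≤ m)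
    (π σ : ℕ → Fin d → ℝ) (x x' : Fin d → ℝ) (hxx : x ≤ x')
    (hgrid : ∀ i ∈ Finset.Icc 1 n, ∀ j ∈ Finset.Icc 1 m, ∀ k : Fin d,
      π i k - σ j k ∉ Set.Ioo (x k) (x' k)) :
    ConcaveOn ℝ (Set.Icc x x') (fun τ => dtwL1 n m π (fun j => σ j + τ)) ∧
    ∃ c : Fin d → ℝ, (∀ k : Fin d, c k = x k ∨ c k = x' k) ∧
      ∀ τ ∈ Set.Icc x x',
        dtwL1 n m π (fun j => σ j + c) ≤ dtwL1 n m π (fun j => σ j + τ) :=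
  dtwL1_concave_on_cell_general d n m π σ x x' hgrid
end
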